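/- Let P ⊆ ℝ^d be a polytope with nonempty interior. Then every facet of the difference polytope P′ = P − P = {x − y : x, y ∈ P} is of the form F₁ − F₂, where F₁ and F₂ are strictly antipodal faces of P whose Minkowski sum F₁ + F₂ has affine dimension d − 1. -/

import Mathlib

open Set Metric Pointwise

noncomputable section

variable {d : ℕ}

abbrev Euc (d : ℕ) := EuclideanSpace ℝ (Fin d)

/-- A polytope is the convex hull of finitely many points. -/
def IsPolytope (P : Set (Euc d)) : Prop :=
  ∃ V : Finset (Euc d), P = convexHull ℝ (V : Set (Euc d))

/-- A convex body is a compact convex set with nonempty interior. -/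
def IsConvexBody (K : Set (Euc d)) : Prop :=
  Convex ℝ K ∧ IsCompact K ∧ (interior K).Nonempty

/-- Support function. -/
def suppFn (K : Set (Euc d)) (u : Euc d) : ℝ :=
  sSup {r | ∃ x ∈ K, r = inner ℝ u x}

/-- Width in direction `u`. -/
def dirWidth (K : Set (Euc d)) (u : Euc d) : ℝ :=
  suppFn K u + suppFn K (-u)

/-- Minimum width. -/
def minWidth (K : Set (Euc d)) : ℝ :=
  sInf {r | ∃ u : Euc d, ‖u‖ = 1 ∧ r = dirWidth K u}

/-- A convex body is reduced if every convex body properly contained in it has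
strictly smaller minimum width. -/
def IsReducedBody (K : Set (Euc d)) : Prop :=
  IsConvexBody K ∧ ∀ K' : Set (Euc d), IsConvexBody K' → K' ⊂ K → minWidth K' < minWidth K

/-- The intersection of `P` with the supporting hyperplane with outer normal `u`. -/
def suppSet (P : Set (Euc d)) (u : Euc d) : Set (Euc d) :=
  P ∩ {x | (inner ℝ u x : ℝ) = suppFn P u}

/-- A (proper, nonempty) face of a polytope. -/
def IsFaceOf (P F : Set (Euc d)) : Prop :=
  ∃ u : Euc d, ‖u‖ = 1 ∧ F = suppSet P u

/-- Affine dimension of a set. -/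
def affDim (A : Set (Euc d)) : ℕ :=
  Module.finrank ℝ (affineSpan ℝ A).direction

def IsVertexOf (P : Set (Euc d)) (v : Euc d) : Prop :=
  IsFaceOf P {v}

def IsEdgeOf (P F : Set (Euc d)) : Prop :=
  IsFaceOf P F ∧ affDim F = 1

def IsFacetOf (P F : Set (Euc d)) : Prop :=
  IsFaceOf P F ∧ affDim F = d - 1

/-- Distinct faces `F₁`, `F₂` are strictly antipodal if there is a unit direction `u`
with `H(P,u) ∩ P = F₁` and `H(P,-u) ∩ P = F₂`. -/
def StrictlyAntipodal (P F₁ F₂ : Set (Euc d)) : Prop :=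
  F₁ ≠ F₂ ∧ ∃ u : Euc d, ‖u‖ = 1 ∧ suppSet P u = F₁ ∧ suppSet P (-u) = F₂

/-- Distance between the affine hulls of `A` and `B`. -/
def affDist (A B : Set (Euc d)) : ℝ :=
  sInf {r | ∃ x ∈ (affineSpan ℝ A : Set (Euc d)), ∃ y ∈ (affineSpan ℝ B : Set (Euc d)),
    r = dist x y}

/-!
For a unit vector `u`, a difference `x - y` of points of `P` maximises `⟨u, ·⟩` over `P - P`
exactly when `x` maximises `⟨u, ·⟩` and `y` maximises `⟨-u, ·⟩` over `P`. Hence the facet of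
`P - P` with outer normal `u` is `F₁ - F₂` for the faces `F₁ = H(P,u) ∩ P`, `F₂ = H(P,-u) ∩ P`,
which are distinct because `P` has positive width in every direction. Finally `F₁ + F₂` and
`F₁ - F₂` both have vector span `span(F₁ - F₁) ⊔ span(F₂ - F₂)`, so they have the same affine
dimension.
-/

section VectorSpan

variable {k V : Type*} [Ring k] [AddCommGroup V] [Module k V]

theorem vectorSpan_neg (s : Set V) : vectorSpan k (-s) = vectorSpan k s := by
  change Submodule.span k (-s - -s) = Submodule.span k (s - s)
  rw [neg_sub_neg]

theorem vectorSpan_add {s t : Set V} (hs : s.Nonempty) (ht : t.Nonempty) :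
    vectorSpan k (s + t) = vectorSpan k s ⊔ vectorSpan k t := by
  obtain ⟨a₀, ha₀⟩ := hs
  obtain ⟨b₀, hb₀⟩ := ht
  refine le_antisymm ?_ (sup_le ?_ ?_)
  · rw [vectorSpan_def, Submodule.span_le]
    rintro _ ⟨_, ⟨a, ha, b, hb, rfl⟩, _, ⟨a', ha', b', hb', rfl⟩, rfl⟩
    change a + b - (a' + b') ∈ _
    rw [add_sub_add_comm]
    exact Submodule.add_mem_sup (vsub_mem_vectorSpan k ha ha') (vsub_mem_vectorSpan k hb hb')
  · calc vectorSpan k s = vectorSpan k (b₀ +ᵥ s) := (vectorSpan_vadd k s b₀).symm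
      _ ≤ vectorSpan k (s + t) := vectorSpan_mono k ?_
    rintro _ ⟨a, ha, rfl⟩
    change b₀ + a ∈ s + t
    rw [add_comm b₀]
    exact Set.add_mem_add ha hb₀
  · calc vectorSpan k t = vectorSpan k (a₀ +ᵥ t) := (vectorSpan_vadd k t a₀).symm
      _ ≤ vectorSpan k (s + t) := vectorSpan_mono k ?_
    rintro _ ⟨b, hb, rfl⟩
    exact Set.add_mem_add ha₀ hb

theorem vectorSpan_sub {s t : Set V} (hs : s.Nonempty) (ht : t.Nonempty) :
    vectorSpan k (s - t) = vectorSpan k s ⊔ vectorSpan k t := by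
  rw [sub_eq_add_neg, vectorSpan_add hs ht.neg, vectorSpan_neg]

end VectorSpan

section SupportFunction

variable {K L : Set (Euc d)}

theorem inner_sub_eq_add_inner_neg (u x y : Euc d) :
    inner ℝ u (x - y) = inner ℝ u x + inner ℝ (-u) y := by
  rw [inner_sub_right, inner_neg_left, sub_eq_add_neg]

theorem isGreatest_suppFn (hK : IsCompact K) (hne : K.Nonempty) (u : Euc d) :
    IsGreatest {r | ∃ x ∈ K, r = inner ℝ u x} (suppFn K u) := by
  have hset : {r | ∃ x ∈ K, r = inner ℝ u x} = (inner ℝ u ·) '' K := by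
    ext r
    simp [eq_comm]
  rw [suppFn, hset]
  exact (hK.image (continuous_const.inner continuous_id)).isGreatest_sSup (hne.image _)

theorem inner_le_suppFn (hK : IsCompact K) (u : Euc d) {x : Euc d} (hx : x ∈ K) :
    inner ℝ u x ≤ suppFn K u :=
  (isGreatest_suppFn hK ⟨x, hx⟩ u).2 ⟨x, hx, rfl⟩

theorem suppSet_nonempty (hK : IsCompact K) (hne : K.Nonempty) (u : Euc d) :
    (suppSet K u).Nonempty := by
  obtain ⟨x, hx, hxu⟩ := (isGreatest_suppFn hK hne u).1
  exact ⟨x, hx, hxu.symm⟩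

theorem suppFn_sub (hK : IsCompact K) (hKne : K.Nonempty) (hL : IsCompact L)
    (hLne : L.Nonempty) (u : Euc d) :
    suppFn (K - L) u = suppFn K u + suppFn L (-u) := by
  refine IsGreatest.csSup_eq ⟨?_, ?_⟩
  · obtain ⟨x, hx, hxu⟩ := (isGreatest_suppFn hK hKne u).1
    obtain ⟨y, hy, hyu⟩ := (isGreatest_suppFn hL hLne (-u)).1
    refine ⟨x - y, sub_mem_sub hx hy, ?_⟩
    rw [hxu, hyu, inner_sub_eq_add_inner_neg]
  · rintro _ ⟨_, ⟨x, hx, y, hy, rfl⟩, rfl⟩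
    rw [inner_sub_eq_add_inner_neg]
    exact add_le_add (inner_le_suppFn hK u hx) (inner_le_suppFn hL (-u) hy)

theorem suppSet_sub (hK : IsCompact K) (hKne : K.Nonempty) (hL : IsCompact L)
    (hLne : L.Nonempty) (u : Euc d) :
    suppSet (K - L) u = suppSet K u - suppSet L (-u) := by
  ext z
  constructor
  · rintro ⟨⟨x, hx, y, hy, rfl⟩, hz⟩
    replace hz : inner ℝ u x + inner ℝ (-u) y = suppFn K u + suppFn L (-u) := by
      rw [← inner_sub_eq_add_inner_neg, ← suppFn_sub hK hKne hL hLne]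
      exact hz
    have hx' := inner_le_suppFn hK u hx
    have hy' := inner_le_suppFn hL (-u) hy
    have hxu : inner ℝ u x = suppFn K u := by linarith
    have hyu : inner ℝ (-u) y = suppFn L (-u) := by linarith
    exact sub_mem_sub ⟨hx, hxu⟩ ⟨hy, hyu⟩
  · rintro ⟨x, ⟨hx, hxu⟩, y, ⟨hy, hyu⟩, rfl⟩
    refine ⟨sub_mem_sub hx hy, ?_⟩
    change inner ℝ u (x - y) = suppFn (K - L) u
    rw [inner_sub_eq_add_inner_neg, suppFn_sub hK hKne hL hLne, hxu.out, hyu.out]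

theorem dirWidth_pos (hK : IsCompact K) (hint : (interior K).Nonempty) {u : Euc d}
    (hu : u ≠ 0) : 0 < dirWidth K u := by
  obtain ⟨c, hc⟩ := hint
  obtain ⟨ε, hε, hball⟩ := Metric.mem_nhds_iff.mp (mem_interior_iff_mem_nhds.mp hc)
  set v := (ε / 2 / ‖u‖) • u
  have hv : ‖v‖ < ε := by
    rw [norm_smul, Real.norm_of_nonneg (by positivity),
      div_mul_cancel₀ _ (norm_ne_zero_iff.mpr hu)]
    linarith
  have huv : 0 < inner ℝ u v := by
    rw [real_inner_smul_right]
    exact mul_pos (by positivity) (real_inner_self_pos.mpr hu)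
  have hplus : c + v ∈ K := hball (by simpa [dist_eq_norm] using hv)
  have hminus : c - v ∈ K := hball (by simpa [dist_eq_norm] using hv)
  have h₁ := inner_le_suppFn hK u hplus
  have h₂ := inner_le_suppFn hK (-u) hminus
  rw [inner_add_right] at h₁
  rw [inner_neg_left, inner_sub_right] at h₂
  unfold dirWidth
  linarith

theorem suppSet_ne_suppSet_neg (hK : IsCompact K) (hne : K.Nonempty) {u : Euc d}
    (hu : 0 < dirWidth K u) : suppSet K u ≠ suppSet K (-u) := by
  intro h
  obtain ⟨x, hx⟩ := suppSet_nonempty hK hne u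
  have hx' : x ∈ suppSet K (-u) := h ▸ hx
  have hxu : inner ℝ u x = suppFn K u := hx.2
  have hxu' : inner ℝ (-u) x = suppFn K (-u) := hx'.2
  rw [inner_neg_left] at hxu'
  unfold dirWidth at hu
  linarith

end SupportFunction

theorem affDim_add_eq_affDim_sub {A B : Set (Euc d)} (hA : A.Nonempty) (hB : B.Nonempty) :
    affDim (A + B) = affDim (A - B) := by
  rw [affDim, affDim, direction_affineSpan, direction_affineSpan, vectorSpan_add hA hB,
    vectorSpan_sub hA hB]

theorem IsPolytope.isCompact {P : Set (Euc d)} (hP : IsPolytope P) : IsCompact P := by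
  obtain ⟨V, rfl⟩ := hP
  exact V.finite_toSet.isCompact_convexHull ℝ

/-- Every facet of the difference polytope `P - P` of a polytope `P ⊆ ℝ^d` with
nonempty interior has the form `F₁ - F₂`, where `F₁` and `F₂` are strictly antipodal
faces of `P` whose Minkowski sum has affine dimension `d - 1`. -/
theorem facet_of_difference_polytope {d : ℕ} (P : Set (Euc d))
    (hP : IsPolytope P) (hint : (interior P).Nonempty)
    (G : Set (Euc d)) (hG : IsFacetOf (P - P) G) :
    ∃ F₁ F₂ : Set (Euc d), IsFaceOf P F₁ ∧ IsFaceOf P F₂ ∧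
      StrictlyAntipodal P F₁ F₂ ∧ G = F₁ - F₂ ∧ affDim (F₁ + F₂) = d - 1 := by
  have hcomp := hP.isCompact
  have hne := hint.mono interior_subset
  obtain ⟨⟨u, hu, rfl⟩, hdim⟩ := hG
  have hu₀ : u ≠ 0 := by
    rintro rfl
    simp at hu
  have hface : suppSet (P - P) u = suppSet P u - suppSet P (-u) :=
    suppSet_sub hcomp hne hcomp hne u
  have hdistinct := suppSet_ne_suppSet_neg hcomp hne (dirWidth_pos hcomp hint hu₀)
  refine ⟨_, _, ⟨u, hu, rfl⟩, ⟨-u, by rwa [norm_neg], rfl⟩, ⟨hdistinct, u, hu, rfl, rfl⟩,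
    hface, ?_⟩
  rw [affDim_add_eq_affDim_sub (suppSet_nonempty hcomp hne u) (suppSet_nonempty hcomp hne (-u)),
    ← hface, hdim]
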